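/- arXiv:2509.18062 — 4 statements merged into one kernel-verified Lean document; each statement's English description precedes it below -/
import Mathlib

section
/- Let B be a group and V a finite-dimensional vector space over a field k with a linear B-action admitting a finite chain of B-invariant subspaces 0 = V_0 ⊆ V_1 ⊆ ... ⊆ V_n = V such that B acts on each successive quotient V_i/V_{i-1} through a character (i.e., by scalars). Then for every subspace X ⊆ V there exists a subspace Y ⊆ V such that V = (b·Y) ⊕ X for every b ∈ B. -/
/-- If a group `B` acts linearly on a finite-dimensional vector space `V` admitting a
finite chain of `B`-invariant subspaces with character (scalar) action on each successive
quotient, then for every subspace `X` there is a subspace `Y` with `V = (b·Y) ⊕ X`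
for every `b ∈ B`. -/
theorem stmt0 {k : Type*} [Field k] {V : Type*} [AddCommGroup V] [Module k V]
    [FiniteDimensional k V] {B : Type*} [Group B] (ρ : Representation k B V)
    (n : ℕ) (F : Fin (n + 1) → Submodule k V)
    (hF0 : F 0 = ⊥) (hFn : F (Fin.last n) = ⊤) (hmono : Monotone F)
    (hinv : ∀ (i : Fin (n + 1)) (b : B), (F i).map (ρ b) ≤ F i)
    (hchar : ∀ i : Fin n, ∃ χ : B →* kˣ, ∀ (b : B), ∀ v ∈ F i.succ,
      ρ b v - (χ b : k) • v ∈ F i.castSucc)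
    (X : Submodule k V) :
    ∃ Y : Submodule k V, ∀ b : B, IsCompl (Y.map (ρ b)) X := by
  classical
  -- Step 1: build Y adapted to the flag.
  have key : ∀ i : Fin (n + 1), ∃ Y : Submodule k V,
      Y ≤ F i ∧ Disjoint Y X ∧ ∀ j : Fin (n + 1), j ≤ i → F j ≤ X ⊔ (Y ⊓ F j) := by
    intro i
    induction i using Fin.induction with
    | zero =>
      refine ⟨⊥, bot_le, disjoint_bot_left, fun j hj => ?_⟩
      have : j = 0 := le_antisymm hj (Fin.zero_le j)
      rw [this, hF0]; exact bot_le
    | succ i ih =>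
      obtain ⟨Y, hYle, hYdisj, hYj⟩ := ih
      set G : Submodule k V := (X ⊓ F i.succ) ⊔ F i.castSucc with hG
      obtain ⟨C', hC'⟩ := Submodule.exists_isCompl G
      set C : Submodule k V := F i.succ ⊓ C' with hC
      have hGle : G ≤ F i.succ :=
        sup_le inf_le_right (hmono (Fin.castSucc_le_succ i))
      have hGC : G ⊔ C = F i.succ := by
        rw [hC, sup_comm, inf_sup_assoc_of_le _ hGle, sup_comm, hC'.codisjoint.eq_top,
          inf_top_eq]
      have hCdisjG : Disjoint C G := by
        refine Disjoint.mono_left inf_le_right ?_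
        exact hC'.disjoint.symm
      refine ⟨Y ⊔ C, sup_le (hYle.trans (hmono (Fin.castSucc_le_succ i))) inf_le_left,
        ?_, ?_⟩
      · -- disjointness
        rw [Submodule.disjoint_def]
        intro v hv hvX
        rw [Submodule.mem_sup] at hv
        obtain ⟨y, hy, c, hc, rfl⟩ := hv
        have hsum : y + c ∈ F i.succ :=
          (sup_le (hYle.trans (hmono (Fin.castSucc_le_succ i))) inf_le_left)
            (Submodule.add_mem_sup hy hc)
        have hcG : c ∈ G := by
          have h2 : y ∈ F i.castSucc := hYle hy
          have hc' : c = (y + c) - y := by abel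
          rw [hc']
          exact G.sub_mem ((le_sup_left : X ⊓ F i.succ ≤ G) ⟨hvX, hsum⟩)
            ((le_sup_right : F i.castSucc ≤ G) h2)
        have hc0 : c = 0 := by simpa using hCdisjG.le_bot ⟨hc, hcG⟩
        have hy0 : y = 0 :=
          Submodule.disjoint_def.mp hYdisj y hy (by simpa [hc0] using hvX)
        simp [hc0, hy0]
      · intro j hj
        rcases lt_or_eq_of_le hj with hlt | rfl
        · have hj' : j ≤ i.castSucc := Fin.le_castSucc_iff.mpr hlt
          refine (hYj j hj').trans (sup_le_sup_left (inf_le_inf_right _ le_sup_left) _)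
        · -- j = i.succ
          refine le_trans (le_of_eq hGC.symm) (sup_le (sup_le ?_ ?_) ?_)
          · exact le_sup_of_le_left inf_le_left
          · refine (hYj i.castSucc le_rfl).trans (sup_le_sup_left ?_ _)
            exact inf_le_inf le_sup_left (hmono (Fin.castSucc_le_succ i))
          · exact le_sup_of_le_right (le_inf le_sup_right inf_le_left)
  obtain ⟨Y, _, hYdisj, hYj⟩ := key (Fin.last n)
  have hYtop : ∀ j : Fin (n + 1), F j ≤ X ⊔ (Y ⊓ F j) := fun j => hYj j (Fin.le_last j)
  -- ρ b is bijective
  have hequiv : ∀ b : B, ∃ e : V ≃ₗ[k] V, (e : V →ₗ[k] V) = ρ b := by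
    intro b
    refine ⟨LinearEquiv.ofLinear (ρ b) (ρ b⁻¹) ?_ ?_, rfl⟩
    · rw [← Module.End.mul_eq_comp, ← map_mul, mul_inv_cancel, map_one, Module.End.one_eq_id]
    · rw [← Module.End.mul_eq_comp, ← map_mul, inv_mul_cancel, map_one, Module.End.one_eq_id]
  refine ⟨Y, fun b => ?_⟩
  obtain ⟨e, he⟩ := hequiv b
  -- codisjointness: X ⊔ ρ b '' Y = ⊤, by induction along the flag
  have hcod : ∀ j : Fin (n + 1), F j ≤ X ⊔ Y.map (ρ b) := by
    intro j
    induction j using Fin.induction with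
    | zero => rw [hF0]; exact bot_le
    | succ i ih =>
      obtain ⟨χ, hχ⟩ := hchar i
      intro v hv
      have hv' : v ∈ X ⊔ (Y ⊓ F i.succ) := hYtop i.succ hv
      rw [Submodule.mem_sup] at hv'
      obtain ⟨x, hx, y, hy, rfl⟩ := hv'
      set y' : V := ((χ b : k)⁻¹) • y with hy'
      have hy'F : y' ∈ F i.succ := (F i.succ).smul_mem _ hy.2
      have hy'Y : y' ∈ Y := Y.smul_mem _ hy.1
      have hw : ρ b y' - (χ b : k) • y' ∈ F i.castSucc := hχ b y' hy'F
      have hsm : (χ b : k) • y' = y := by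
        rw [hy', smul_smul, mul_inv_cancel₀ (Units.ne_zero (χ b)), one_smul]
      rw [hsm] at hw
      have hwmem : ρ b y' - y ∈ X ⊔ Y.map (ρ b) := ih hw
      rw [Submodule.mem_sup] at hwmem
      obtain ⟨x2, hx2, m2, hm2, heq⟩ := hwmem
      have : x + y = (x - x2) + (ρ b y' - m2) := by
        have h3 : y = ρ b y' - (x2 + m2) := by rw [heq]; abel
        rw [h3]; abel
      rw [this]
      exact Submodule.add_mem_sup (X.sub_mem hx hx2)
        ((Y.map (ρ b)).sub_mem ⟨y', hy'Y, rfl⟩ hm2)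
  have hcodis : Codisjoint (Y.map (ρ b)) X := by
    rw [codisjoint_iff, eq_top_iff, ← hFn, sup_comm]
    exact hcod (Fin.last n)
  -- disjointness via dimensions
  have hYcompl : IsCompl Y X := by
    refine ⟨hYdisj, ?_⟩
    rw [codisjoint_iff, sup_comm, eq_top_iff, ← hFn]
    exact (hYtop (Fin.last n)).trans (sup_le_sup_left inf_le_left _)
  have hdim : Module.finrank k (Y.map (ρ b)) = Module.finrank k Y := by
    rw [← he]
    exact LinearEquiv.finrank_map_eq e Y
  have hdimV : Module.finrank k Y + Module.finrank k X = Module.finrank k V :=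
    Submodule.finrank_add_eq_of_isCompl hYcompl
  refine ⟨?_, hcodis⟩
  have h1 := Submodule.finrank_sup_add_finrank_inf_eq (Y.map (ρ b)) X
  rw [hcodis.eq_top, hdim, hdimV, finrank_top] at h1
  have h2 : Module.finrank k ↥(Y.map (ρ b) ⊓ X) = 0 := by omega
  rw [disjoint_iff]
  exact Submodule.finrank_eq_zero.mp h2
end

section
/- Let A be a commutative Noetherian ring, Λ a free abelian group of finite rank, and Λ⁻ ⊆ Λ a finitely generated submonoid generating Λ as a group. Let M be a module over the group algebra A[Λ] which is finitely generated as an A-module, N an A-module, M₀ ⊆ M an additive subgroup, and e₀ : M₀ → N an additive map. Assume: for every m ∈ M and h ∈ A there exists λ₀ ∈ Λ such that for all λ ∈ λ₀ + Λ⁻ one has λ·m ∈ M₀, λ·(h m) ∈ M₀, and e₀(λ·(h m)) = h · e₀(λ·m). Then there exists a unique A-linear map e : M → N with the property: for every m ∈ M there exists λ₀ ∈ Λ such that for all λ ∈ λ₀ + Λ⁻ one has λ·m ∈ M₀ and e(λ·m) = e₀(λ·m). -/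
/-!
Pick `s ∈ Λ⁻` (the sum of a finite generating set) such that `n • s` eventually lies in every
translate `λ₀ + Λ⁻`. The operator `T = σ s` is invertible on the finite `A`-module `M`, so
Cayley–Hamilton for `T⁻¹` yields `g` with `g(0) = 0` and `g(T) = 1`. Writing `g ^ k = ∑ cₙ Xⁿ`,
`m = g(T)ᵏ m = ∑ cₙ Tⁿ m` only involves translates `n • s` with `n ≥ k`, which are deep when `k` is
large; so an extension is forced to be `e m = ∑ cₙ e₀ (Tⁿ m)` for large `k`. Conversely, as `e₀` is
eventually linear, `λ ↦ e₀ (λ • m)` is eventually fixed by `g` acting through the shift by `s`,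
hence this expression stabilises in `k` and defines the extension.
-/

open Filter Polynomial LinearMap

namespace AddSubmonoid

variable {Λ : Type*} [AddCommGroup Λ] {P : AddSubmonoid Λ}

theorem exists_eq_sub_of_closure_eq_top (hP : AddSubgroup.closure (P : Set Λ) = ⊤) (x : Λ) :
    ∃ a ∈ P, ∃ b ∈ P, x = a - b := by
  have hx : x ∈ AddSubgroup.closure (P : Set Λ) := hP ▸ AddSubgroup.mem_top x
  induction hx using AddSubgroup.closure_induction with
  | mem x hx => exact ⟨x, hx, 0, P.zero_mem, (sub_zero x).symm⟩
  | zero => exact ⟨0, P.zero_mem, 0, P.zero_mem, (sub_zero 0).symm⟩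
  | add x y _ _ hx hy =>
    obtain ⟨a, ha, b, hb, rfl⟩ := hx
    obtain ⟨c, hc, d, hd, rfl⟩ := hy
    exact ⟨a + c, P.add_mem ha hc, b + d, P.add_mem hb hd, by abel⟩
  | neg x _ hx =>
    obtain ⟨a, ha, b, hb, rfl⟩ := hx
    exact ⟨b, hb, a, ha, neg_sub a b⟩

variable (P) in
def coneFilter : Filter Λ :=
  ⨅ x₀ : Λ, 𝓟 {x | x - x₀ ∈ P}

theorem hasBasis_coneFilter (hP : AddSubgroup.closure (P : Set Λ) = ⊤) :
    P.coneFilter.HasBasis (fun _ => True) fun x₀ => {x | x - x₀ ∈ P} := by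
  refine hasBasis_iInf_principal fun x₁ x₂ => ?_
  obtain ⟨a, ha, b, hb, hab⟩ := exists_eq_sub_of_closure_eq_top hP (x₂ - x₁)
  refine ⟨x₁ + a, fun x hx => ?_, fun x hx => ?_⟩
  · simpa [show x - x₁ = (x - (x₁ + a)) + a by abel] using P.add_mem hx ha
  · simpa [show x - x₂ = (x - (x₁ + a)) + b by rw [sub_eq_iff_eq_add.mp hab]; abel]
      using P.add_mem hx hb

theorem eventually_coneFilter_iff (hP : AddSubgroup.closure (P : Set Λ) = ⊤) {Q : Λ → Prop} :
    (∀ᶠ x in P.coneFilter, Q x) ↔ ∃ x₀, ∀ μ ∈ P, Q (x₀ + μ) := by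
  refine (hasBasis_coneFilter hP).eventually_iff.trans ⟨?_, ?_⟩
  · rintro ⟨x₀, -, h⟩
    exact ⟨x₀, fun μ hμ => h (by simpa using hμ)⟩
  · rintro ⟨x₀, h⟩
    exact ⟨x₀, trivial, fun x hx => by simpa using h _ hx⟩

theorem exists_tendsto_nsmul_coneFilter (hfg : P.FG)
    (hP : AddSubgroup.closure (P : Set Λ) = ⊤) :
    ∃ s ∈ P, Tendsto (fun n : ℕ => n • s) atTop P.coneFilter := by
  classical
  obtain ⟨S, rfl⟩ := hfg
  set s := ∑ x ∈ S, x
  have hs : s ∈ closure (S : Set Λ) := _root_.sum_mem fun x hx => subset_closure hx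
  have hlarge : ∀ a ∈ closure (S : Set Λ), ∃ n : ℕ, n • s - a ∈ closure (S : Set Λ) := by
    intro a ha
    induction ha using closure_induction with
    | mem x hx =>
      refine ⟨1, ?_⟩
      rw [one_nsmul, show s = _ from (Finset.add_sum_erase S (fun x => x) hx).symm,
        add_sub_cancel_left]
      exact _root_.sum_mem fun y hy => subset_closure (Finset.mem_of_mem_erase hy)
    | zero => exact ⟨0, by simp⟩
    | add x y _ _ hx hy =>
      obtain ⟨n₁, h₁⟩ := hx
      obtain ⟨n₂, h₂⟩ := hy
      have : (n₁ + n₂) • s - (x + y) = (n₁ • s - x) + (n₂ • s - y) := by rw [add_nsmul]; abel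
      exact ⟨n₁ + n₂, this ▸ (closure _).add_mem h₁ h₂⟩
  refine ⟨s, hs, (hasBasis_coneFilter hP).tendsto_right_iff.2 fun x₀ _ => ?_⟩
  obtain ⟨a, ha, b, hb, rfl⟩ := exists_eq_sub_of_closure_eq_top hP x₀
  obtain ⟨n₀, hn₀⟩ := hlarge a ha
  refine eventually_atTop.2 ⟨n₀, fun n hn => ?_⟩
  obtain ⟨k, rfl⟩ := Nat.exists_eq_add_of_le hn
  have : (n₀ + k) • s - (a - b) = (n₀ • s - a) + (k • s + b) := by rw [add_nsmul]; abel
  simpa [this] using (closure _).add_mem hn₀ ((closure _).add_mem ((closure _).nsmul_mem hs k) hb)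

end AddSubmonoid

theorem Polynomial.aeval_reflect_units {A B : Type*} [CommRing A] [Ring B] [Algebra A B]
    (u : Bˣ) {N : ℕ} {p : A[X]} (hp : p.natDegree ≤ N) :
    aeval (u : B) (reflect N p) = ↑(u ^ N) * aeval (↑u⁻¹ : B) p := by
  refine induction_with_natDegree_le
    (fun p => aeval (u : B) (reflect N p) = ↑(u ^ N) * aeval (↑u⁻¹ : B) p) N (by simp)
    (fun n r _ hn => ?_) (fun p q _ _ hp hq => by simp [reflect_add, hp, hq, mul_add]) p hp
  obtain ⟨k, rfl⟩ := Nat.exists_eq_add_of_le hn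
  simp only [reflect_C_mul_X_pow, revAt_le hn, Nat.add_sub_cancel_left, map_mul, aeval_C,
    map_pow, aeval_X, ← Units.val_pow_eq_pow_val, Algebra.commutes]
  rw [← mul_assoc, ← Units.val_mul, inv_pow, add_comm, pow_add, mul_inv_cancel_right]

theorem Module.End.exists_X_dvd_and_aeval_eq_one {A M : Type*} [CommRing A] [AddCommGroup M]
    [Module A M] [Module.Finite A M] {T : Module.End A M} (hT : IsUnit T) :
    ∃ g : A[X], X ∣ g ∧ aeval T g = 1 := by
  obtain ⟨u, rfl⟩ := hT
  obtain ⟨p, hmonic, hp⟩ := LinearMap.exists_monic_and_aeval_eq_zero A (↑u⁻¹ : Module.End A M)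
  refine ⟨1 - p.reverse, X_dvd_iff.2 ?_, ?_⟩
  · simp [coeff_zero_reverse, hmonic.leadingCoeff]
  · rw [map_sub, map_one, reverse, aeval_reflect_units u le_rfl, hp, mul_zero, sub_zero]

theorem Polynomial.le_of_mem_support_of_X_pow_dvd {R : Type*} [Semiring R] {p : R[X]} {k n : ℕ}
    (h : X ^ k ∣ p) (hn : n ∈ p.support) : k ≤ n :=
  not_lt.1 fun hlt => mem_support_iff.1 hn (X_pow_dvd_iff.1 h n hlt)

section Shift

variable {A Λ N : Type*} [CommRing A] [AddCommGroup Λ] [AddCommGroup N] [Module A N] {s : Λ}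

theorem funLeft_add_pow_apply (n : ℕ) (w : Λ → N) (x : Λ) :
    ((funLeft A N (· + s)) ^ n) w x = w (x + n • s) := by
  induction n generalizing x with
  | zero => simp
  | succ n ih => rw [pow_succ', Module.End.mul_apply, funLeft_apply, ih, add_assoc, succ_nsmul']

theorem aeval_funLeft_add_apply (p : A[X]) (w : Λ → N) (x : Λ) :
    aeval (funLeft A N (· + s)) p w x = p.sum fun n a => a • w (x + n • s) := by
  induction p using Polynomial.induction_on' with
  | add p q hp hq => simp [hp, hq, sum_add_index, add_smul]
  | monomial n a =>
    simp only [aeval_monomial, Module.End.mul_apply, Module.algebraMap_end_apply, Pi.smul_apply]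
    rw [funLeft_add_pow_apply, sum_monomial_index _ _ (zero_smul A _)]

theorem aeval_funLeft_add_congr {p : A[X]} {v w : Λ → N} {x : Λ}
    (h : ∀ n ∈ p.support, v (x + n • s) = w (x + n • s)) :
    aeval (funLeft A N (· + s)) p v x = aeval (funLeft A N (· + s)) p w x := by
  simp only [aeval_funLeft_add_apply, Polynomial.sum_def]
  exact Finset.sum_congr rfl fun n hn => by rw [h n hn]

theorem aeval_funLeft_add_comp_add (p : A[X]) (w : Λ → N) (x μ : Λ) :
    aeval (funLeft A N (· + s)) p (fun y => w (y + μ)) x =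
      aeval (funLeft A N (· + s)) p w (x + μ) := by
  simp only [aeval_funLeft_add_apply, add_right_comm]

variable {g : A[X]} {w : Λ → N} {L : Filter Λ}

theorem eventually_aeval_pow_funLeft_eq_of_eventuallyEq
    (hst : Tendsto (fun n : ℕ => n • s) atTop L) (hXg : X ∣ g) {v : Λ → N} (h : v =ᶠ[L] w) :
    ∀ᶠ k in atTop,
      aeval (funLeft A N (· + s)) (g ^ k) v 0 = aeval (funLeft A N (· + s)) (g ^ k) w 0 := by
  obtain ⟨k₀, hk₀⟩ := eventually_atTop.1 (hst.eventually h)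
  refine eventually_atTop.2 ⟨k₀, fun k hk => aeval_funLeft_add_congr fun n hn => ?_⟩
  rw [zero_add]
  exact hk₀ n (hk.trans (le_of_mem_support_of_X_pow_dvd (pow_dvd_pow_of_dvd hXg k) hn))

theorem exists_eventually_aeval_pow_funLeft_eq (hst : Tendsto (fun n : ℕ => n • s) atTop L)
    (hXg : X ∣ g) (h : ∀ᶠ x in L, ∀ k, aeval (funLeft A N (· + s)) (g ^ k) w x = w x) :
    ∃ c, ∀ᶠ k in atTop, aeval (funLeft A N (· + s)) (g ^ k) w 0 = c := by
  obtain ⟨k₀, hk₀⟩ := eventually_atTop.1 (hst.eventually h)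
  refine ⟨aeval (funLeft A N (· + s)) (g ^ k₀) w 0, eventually_atTop.2 ⟨k₀, fun k hk => ?_⟩⟩
  obtain ⟨j, rfl⟩ := Nat.exists_eq_add_of_le hk
  rw [pow_add, map_mul, Module.End.mul_apply]
  refine aeval_funLeft_add_congr fun n hn => ?_
  rw [zero_add]
  exact hk₀ n (le_of_mem_support_of_X_pow_dvd (pow_dvd_pow_of_dvd hXg k₀) hn) j

theorem eventually_forall_aeval_pow_funLeft_eq {P : AddSubmonoid Λ}
    (hP : AddSubgroup.closure (P : Set Λ) = ⊤) (hs : s ∈ P)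
    (h : w =ᶠ[P.coneFilter] aeval (funLeft A N (· + s)) g w) :
    ∀ᶠ x in P.coneFilter, ∀ k, aeval (funLeft A N (· + s)) (g ^ k) w x = w x := by
  obtain ⟨x₀, hx₀⟩ := (P.eventually_coneFilter_iff hP).1 h
  refine (P.eventually_coneFilter_iff hP).2 ⟨x₀, fun μ hμ k => ?_⟩
  induction k generalizing μ with
  | zero => simp
  | succ k ih =>
    rw [pow_succ, map_mul, Module.End.mul_apply, ← ih μ hμ]
    refine aeval_funLeft_add_congr fun n _ => ?_
    rw [add_assoc]
    exact (hx₀ _ (P.add_mem hμ (P.nsmul_mem hs n))).symm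

end Shift

theorem eventuallyEq_aeval_of_intertwines {A M N α : Type*} [CommRing A] [AddCommGroup M]
    [Module A M] [AddCommGroup N] [Module A N] {L : Filter α} (F : M → α → N)
    (T : Module.End A M) (S : Module.End A (α → N))
    (hadd : ∀ m₁ m₂, F (m₁ + m₂) =ᶠ[L] F m₁ + F m₂) (hsmul : ∀ (a : A) m, F (a • m) =ᶠ[L] a • F m)
    (hT : ∀ m, F (T m) = S (F m)) (p : A[X]) (m : M) :
    F (aeval T p m) =ᶠ[L] aeval S p (F m) := by
  induction p using Polynomial.induction_on' with
  | add p q hp hq =>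
    simp only [map_add, LinearMap.add_apply]
    exact (hadd _ _).trans (hp.add hq)
  | monomial n a =>
    have hpow : ∀ m, F ((T ^ n) m) = (S ^ n) (F m) := by
      intro m
      induction n generalizing m with
      | zero => rfl
      | succ n ih => rw [pow_succ, Module.End.mul_apply, ih, hT, ← Module.End.mul_apply, ← pow_succ]
    simp only [aeval_monomial, Module.End.mul_apply, Module.algebraMap_end_apply, ← hpow]
    exact hsmul a _

/-- The value that `f` eventually takes along `l` (junk if `f` is not eventually constant). -/
noncomputable def eventualValue {ι β : Type*} [Nonempty β] (l : Filter ι) (f : ι → β) : β :=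
  Classical.epsilon fun c => ∀ᶠ i in l, f i = c

theorem eventually_eq_eventualValue {ι β : Type*} [Nonempty β] {l : Filter ι} {f : ι → β}
    (h : ∃ c, ∀ᶠ i in l, f i = c) : ∀ᶠ i in l, f i = eventualValue l f :=
  Classical.epsilon_spec h

section Orbit

variable {A Λ M N : Type*} [CommRing A] [AddCommGroup Λ] [AddCommGroup M] [Module A M]
  [AddCommGroup N] {M₀ : AddSubgroup M}

open Classical in
noncomputable def extendByZero (e₀ : M₀ →+ N) (x : M) : N :=
  if h : x ∈ M₀ then e₀ ⟨x, h⟩ else 0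

theorem extendByZero_of_mem (e₀ : M₀ →+ N) {x : M} (hx : x ∈ M₀) :
    extendByZero e₀ x = e₀ ⟨x, hx⟩ :=
  dif_pos hx

variable (σ : Multiplicative Λ →* (M →ₗ[A] M)) (e₀ : M₀ →+ N)

noncomputable def orbitValues (m : M) (x : Λ) : N :=
  extendByZero e₀ (σ (.ofAdd x) m)

theorem orbitValues_ofAdd (μ : Λ) (m : M) :
    orbitValues σ e₀ (σ (.ofAdd μ) m) = fun x => orbitValues σ e₀ m (x + μ) := by
  ext x
  rw [orbitValues, orbitValues, ofAdd_add, map_mul, Module.End.mul_apply]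

variable [Module A N]

def AsymptoticallyLinear (L : Filter Λ) : Prop :=
  ∀ (m : M) (a : A), ∀ᶠ x in L, ∃ (h₁ : σ (.ofAdd x) m ∈ M₀) (h₂ : σ (.ofAdd x) (a • m) ∈ M₀),
    e₀ ⟨_, h₂⟩ = a • e₀ ⟨_, h₁⟩

variable {σ e₀} {L : Filter Λ}

theorem AsymptoticallyLinear.eventually_mem (hH : AsymptoticallyLinear σ e₀ L) (m : M) :
    ∀ᶠ x in L, σ (.ofAdd x) m ∈ M₀ :=
  (hH m 1).mono fun _ ⟨h₁, _⟩ => h₁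

theorem AsymptoticallyLinear.orbitValues_add (hH : AsymptoticallyLinear σ e₀ L) (m₁ m₂ : M) :
    orbitValues σ e₀ (m₁ + m₂) =ᶠ[L] orbitValues σ e₀ m₁ + orbitValues σ e₀ m₂ := by
  filter_upwards [hH.eventually_mem m₁, hH.eventually_mem m₂] with x h₁ h₂
  simp only [orbitValues, Pi.add_apply, map_add]
  rw [extendByZero_of_mem _ (M₀.add_mem h₁ h₂), extendByZero_of_mem _ h₁,
    extendByZero_of_mem _ h₂]
  exact map_add e₀ ⟨_, h₁⟩ ⟨_, h₂⟩

theorem AsymptoticallyLinear.orbitValues_smul (hH : AsymptoticallyLinear σ e₀ L) (a : A) (m : M) :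
    orbitValues σ e₀ (a • m) =ᶠ[L] a • orbitValues σ e₀ m := by
  filter_upwards [hH m a] with x ⟨h₁, h₂, h⟩
  rw [Pi.smul_apply, orbitValues, orbitValues, extendByZero_of_mem _ h₂,
    extendByZero_of_mem _ h₁, h]

theorem AsymptoticallyLinear.orbitValues_aeval (hH : AsymptoticallyLinear σ e₀ L) (s : Λ)
    (p : A[X]) (m : M) :
    orbitValues σ e₀ (aeval (σ (.ofAdd s)) p m) =ᶠ[L]
      aeval (funLeft A N (· + s)) p (orbitValues σ e₀ m) :=
  eventuallyEq_aeval_of_intertwines _ _ _ hH.orbitValues_add hH.orbitValues_smul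
    (orbitValues_ofAdd σ e₀ s) p m

theorem LinearMap.eq_zero_of_eventually_orbit_eq_zero {s : Λ} {g : A[X]}
    (hst : Tendsto (fun n : ℕ => n • s) atTop L) (hXg : X ∣ g) (hg : aeval (σ (.ofAdd s)) g = 1)
    (d : M →ₗ[A] N) (hd : ∀ m, ∀ᶠ x in L, d (σ (.ofAdd x) m) = 0) : d = 0 := by
  ext m
  let F : M → Λ → N := fun m x => d (σ (.ofAdd x) m)
  have hF : ∀ k, d m = aeval (funLeft A N (· + s)) (g ^ k) (F m) 0 := fun k => by
    have := eventuallyEq_top.1 <| eventuallyEq_aeval_of_intertwines (L := ⊤) F (σ (.ofAdd s))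
      (funLeft A N (· + s)) (fun _ _ => .of_eq (by ext; simp [F]))
      (fun _ _ => .of_eq (by ext; simp [F]))
      (fun m => by ext x; simp [F, ofAdd_add, Module.End.mul_apply]) (g ^ k) m
    simpa [F, hg] using congrFun this 0
  obtain ⟨k, hk⟩ := (eventually_aeval_pow_funLeft_eq_of_eventuallyEq hst hXg (hd m)).exists
  rw [hF k, hk]
  exact congrFun (map_zero _) 0

end Orbit

section Extension

variable {A Λ M N : Type*} [CommRing A] [AddCommGroup Λ] [AddCommGroup M] [Module A M]
  [AddCommGroup N] [Module A N] {M₀ : AddSubgroup M}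
  {σ : Multiplicative Λ →* (M →ₗ[A] M)} {e₀ : M₀ →+ N} {P : AddSubmonoid Λ} {s : Λ} {g : A[X]}

variable (σ e₀) in
noncomputable def asymptoticExtension (s : Λ) (g : A[X]) (m : M) : N :=
  eventualValue atTop fun k => aeval (funLeft A N (· + s)) (g ^ k) (orbitValues σ e₀ m) 0

theorem eventually_forall_aeval_pow_orbitValues (hP : AddSubgroup.closure (P : Set Λ) = ⊤)
    (hs : s ∈ P) (hg : aeval (σ (.ofAdd s)) g = 1) (hH : AsymptoticallyLinear σ e₀ P.coneFilter)
    (m : M) :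
    ∀ᶠ x in P.coneFilter, ∀ k,
      aeval (funLeft A N (· + s)) (g ^ k) (orbitValues σ e₀ m) x = orbitValues σ e₀ m x :=
  eventually_forall_aeval_pow_funLeft_eq hP hs <| by
    simpa [hg] using hH.orbitValues_aeval s g m

theorem eventually_asymptoticExtension_eq (hP : AddSubgroup.closure (P : Set Λ) = ⊤)
    (hs : s ∈ P) (hst : Tendsto (fun n : ℕ => n • s) atTop P.coneFilter) (hXg : X ∣ g)
    (hg : aeval (σ (.ofAdd s)) g = 1) (hH : AsymptoticallyLinear σ e₀ P.coneFilter) (m : M) :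
    ∀ᶠ k in atTop, asymptoticExtension σ e₀ s g m =
      aeval (funLeft A N (· + s)) (g ^ k) (orbitValues σ e₀ m) 0 :=
  (eventually_eq_eventualValue <| exists_eventually_aeval_pow_funLeft_eq hst hXg <|
    eventually_forall_aeval_pow_orbitValues hP hs hg hH m).mono fun _ h => h.symm

theorem asymptoticExtension_add (hP : AddSubgroup.closure (P : Set Λ) = ⊤)
    (hs : s ∈ P) (hst : Tendsto (fun n : ℕ => n • s) atTop P.coneFilter) (hXg : X ∣ g)
    (hg : aeval (σ (.ofAdd s)) g = 1) (hH : AsymptoticallyLinear σ e₀ P.coneFilter) (m₁ m₂ : M) :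
    asymptoticExtension σ e₀ s g (m₁ + m₂) =
      asymptoticExtension σ e₀ s g m₁ + asymptoticExtension σ e₀ s g m₂ := by
  have hext := eventually_asymptoticExtension_eq hP hs hst hXg hg hH
  obtain ⟨k, h, h₁, h₂, hsum⟩ := ((hext (m₁ + m₂)).and <| (hext m₁).and <| (hext m₂).and <|
    eventually_aeval_pow_funLeft_eq_of_eventuallyEq hst hXg (hH.orbitValues_add m₁ m₂)).exists
  rw [h, h₁, h₂, hsum, map_add, Pi.add_apply]

theorem asymptoticExtension_smul (hP : AddSubgroup.closure (P : Set Λ) = ⊤)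
    (hs : s ∈ P) (hst : Tendsto (fun n : ℕ => n • s) atTop P.coneFilter) (hXg : X ∣ g)
    (hg : aeval (σ (.ofAdd s)) g = 1) (hH : AsymptoticallyLinear σ e₀ P.coneFilter)
    (a : A) (m : M) :
    asymptoticExtension σ e₀ s g (a • m) = a • asymptoticExtension σ e₀ s g m := by
  have hext := eventually_asymptoticExtension_eq hP hs hst hXg hg hH
  obtain ⟨k, h, h₁, hsmul⟩ := ((hext (a • m)).and <| (hext m).and <|
    eventually_aeval_pow_funLeft_eq_of_eventuallyEq hst hXg (hH.orbitValues_smul a m)).exists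
  rw [h, h₁, hsmul, map_smul, Pi.smul_apply]

theorem eventually_asymptoticExtension_ofAdd (hP : AddSubgroup.closure (P : Set Λ) = ⊤)
    (hs : s ∈ P) (hst : Tendsto (fun n : ℕ => n • s) atTop P.coneFilter) (hXg : X ∣ g)
    (hg : aeval (σ (.ofAdd s)) g = 1) (hH : AsymptoticallyLinear σ e₀ P.coneFilter) (m : M) :
    ∀ᶠ x in P.coneFilter, asymptoticExtension σ e₀ s g (σ (.ofAdd x) m) = orbitValues σ e₀ m x := by
  filter_upwards [eventually_forall_aeval_pow_orbitValues hP hs hg hH m] with x hx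
  obtain ⟨k, hk⟩ := (eventually_asymptoticExtension_eq hP hs hst hXg hg hH (σ (.ofAdd x) m)).exists
  rw [hk, orbitValues_ofAdd, aeval_funLeft_add_comp_add, zero_add, hx]

end Extension

theorem stmt1_general {A : Type*} [CommRing A]
    {Λ : Type*} [AddCommGroup Λ]
    (Λneg : AddSubmonoid Λ) (hfg : Λneg.FG)
    (hgen : AddSubgroup.closure (Λneg : Set Λ) = ⊤)
    {M N : Type*} [AddCommGroup M] [Module A M] [Module.Finite A M]
    [AddCommGroup N] [Module A N]
    (σ : Multiplicative Λ →* (M →ₗ[A] M))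
    (M₀ : AddSubgroup M) (e₀ : M₀ →+ N)
    (H : ∀ (m : M) (h : A), ∃ lam₀ : Λ, ∀ lam ∈ Λneg,
      ∃ (h₁ : σ (Multiplicative.ofAdd (lam₀ + lam)) m ∈ M₀)
        (h₂ : σ (Multiplicative.ofAdd (lam₀ + lam)) (h • m) ∈ M₀),
        e₀ ⟨_, h₂⟩ = h • e₀ ⟨_, h₁⟩) :
    ∃! e : M →ₗ[A] N, ∀ m : M, ∃ lam₀ : Λ, ∀ lam ∈ Λneg,
      ∃ h₁ : σ (Multiplicative.ofAdd (lam₀ + lam)) m ∈ M₀,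
        e (σ (Multiplicative.ofAdd (lam₀ + lam)) m) = e₀ ⟨_, h₁⟩ := by
  obtain ⟨s, hs, hst⟩ := Λneg.exists_tendsto_nsmul_coneFilter hfg hgen
  obtain ⟨g, hXg, hg⟩ := Module.End.exists_X_dvd_and_aeval_eq_one ((Group.isUnit _).map σ)
  have hH : AsymptoticallyLinear σ e₀ Λneg.coneFilter := fun m a =>
    (Λneg.eventually_coneFilter_iff hgen).2 (H m a)
  let e : M →ₗ[A] N :=
    { toFun := asymptoticExtension σ e₀ s g
      map_add' := asymptoticExtension_add hgen hs hst hXg hg hH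
      map_smul' := asymptoticExtension_smul hgen hs hst hXg hg hH }
  have he : ∀ m, ∀ᶠ x in Λneg.coneFilter,
      ∃ h₁ : σ (.ofAdd x) m ∈ M₀, e (σ (.ofAdd x) m) = e₀ ⟨_, h₁⟩ := fun m => by
    filter_upwards [eventually_asymptoticExtension_ofAdd hgen hs hst hXg hg hH m,
      hH.eventually_mem m] with x hx hmem
    exact ⟨hmem, hx.trans (extendByZero_of_mem e₀ hmem)⟩
  refine ⟨e, fun m => (Λneg.eventually_coneFilter_iff hgen).1 (he m), fun e' he' => ?_⟩
  rw [← sub_eq_zero]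
  refine LinearMap.eq_zero_of_eventually_orbit_eq_zero hst hXg hg _ fun m => ?_
  have he'm : ∀ᶠ x in Λneg.coneFilter,
      ∃ h₁ : σ (.ofAdd x) m ∈ M₀, e' (σ (.ofAdd x) m) = e₀ ⟨_, h₁⟩ :=
    (Λneg.eventually_coneFilter_iff hgen).2 (he' m)
  filter_upwards [he'm, he m] with x ⟨h₁, h₁'⟩ ⟨h₂, h₂'⟩
  rw [LinearMap.sub_apply, h₁', h₂', sub_self]

/-- Multidimensional Bezrukavnikov–Kazhdan lemma: extension of a map defined
asymptotically (along translates of a finitely generated submonoid `Λ⁻` of a lattice `Λ`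
acting on a module `M` over `A[Λ]` that is finite over the Noetherian ring `A`)
to a unique `A`-linear map `e : M → N`. -/
theorem stmt1 {A : Type*} [CommRing A] [IsNoetherianRing A]
    {Λ : Type*} [AddCommGroup Λ] [Module.Free ℤ Λ] [Module.Finite ℤ Λ]
    (Λneg : AddSubmonoid Λ) (hfg : Λneg.FG)
    (hgen : AddSubgroup.closure (Λneg : Set Λ) = ⊤)
    {M N : Type*} [AddCommGroup M] [Module A M] [Module.Finite A M]
    [AddCommGroup N] [Module A N]
    (σ : Multiplicative Λ →* (M →ₗ[A] M))
    (M₀ : AddSubgroup M) (e₀ : M₀ →+ N)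
    (H : ∀ (m : M) (h : A), ∃ lam₀ : Λ, ∀ lam ∈ Λneg,
      ∃ (h₁ : σ (Multiplicative.ofAdd (lam₀ + lam)) m ∈ M₀)
        (h₂ : σ (Multiplicative.ofAdd (lam₀ + lam)) (h • m) ∈ M₀),
        e₀ ⟨_, h₂⟩ = h • e₀ ⟨_, h₁⟩) :
    ∃! e : M →ₗ[A] N, ∀ m : M, ∃ lam₀ : Λ, ∀ lam ∈ Λneg,
      ∃ h₁ : σ (Multiplicative.ofAdd (lam₀ + lam)) m ∈ M₀,
        e (σ (Multiplicative.ofAdd (lam₀ + lam)) m) = e₀ ⟨_, h₁⟩ :=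
  stmt1_general Λneg hfg hgen σ M₀ e₀ H
end

section
/- Let L be a finitely generated free abelian group and v₁, ..., v_ℓ : L → ℤ group homomorphisms. Then the submonoid { x ∈ L : v_i(x) ≥ 0 for all i = 1,...,ℓ } is finitely generated as a monoid. -/
/-!
Choose a surjection `π : ℕⁿ → M`. The solutions `(a, b) ∈ ℕⁿ × ℕ^ι` of the linear equations
`f (π a) = b` form a finitely generated monoid by Dickson's lemma (`AddSubmonoid.fg_eqLocusM`),
and `(a, b) ↦ π a` maps them onto the cone `{x | 0 ≤ f x}`. A finitely generated abelian group
is finitely generated as a monoid, so this applies to `L` with `f = (v₁, …, v_ℓ)`.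
-/

/-- The submonoid of a lattice cut out by finitely many linear inequalities. -/
def nonnegSubmonoid {L : Type*} [AddCommGroup L] {ℓ : ℕ} (v : Fin ℓ → (L →+ ℤ)) :
    AddSubmonoid L where
  carrier := {x | ∀ i, 0 ≤ v i x}
  zero_mem' := fun i => by simp
  add_mem' := fun {a b} ha hb i => by
    rw [map_add]
    exact add_nonneg (ha i) (hb i)

theorem AddSubmonoid.fg_comap_nonneg {M ι : Type*} [AddCommMonoid M] [AddMonoid.FG M] [Finite ι]
    (f : M →+ ι → ℤ) : ((AddSubmonoid.nonneg (ι → ℤ)).comap f).FG := by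
  obtain ⟨n, π, hπ⟩ := Module.Finite.exists_fin' ℕ M
  let p : (Fin n → ℕ) × (ι → ℕ) →+ M := π.toAddMonoidHom.comp (AddMonoidHom.fst _ _)
  let natCast : (ι → ℕ) →+ ι → ℤ := AddMonoidHom.compLeft (Nat.castAddMonoidHom ℤ) ι
  let E := (f.comp p).eqLocusM (natCast.comp (AddMonoidHom.snd _ _))
  suffices E.map p = (AddSubmonoid.nonneg (ι → ℤ)).comap f from
    this ▸ (AddSubmonoid.fg_eqLocusM _ _).map p
  ext x
  simp only [AddSubmonoid.mem_map, AddSubmonoid.mem_comap, AddSubmonoid.mem_nonneg]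
  constructor
  · rintro ⟨d, hd, rfl⟩
    rw [show f (p d) = natCast d.2 from hd]
    exact fun i => Int.natCast_nonneg _
  · intro hx
    obtain ⟨a, rfl⟩ := hπ x
    refine ⟨(a, fun i => (f (π a) i).toNat), ?_, rfl⟩
    funext i
    exact (Int.toNat_of_nonneg (hx i)).symm

theorem nonnegSubmonoid_eq_comap_nonneg {L : Type*} [AddCommGroup L] {ℓ : ℕ}
    (v : Fin ℓ → (L →+ ℤ)) :
    nonnegSubmonoid v = (AddSubmonoid.nonneg (Fin ℓ → ℤ)).comap (AddMonoidHom.pi v) :=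
  AddSubmonoid.ext fun _ => Pi.le_def.symm

theorem stmt2_general {L : Type*} [AddCommGroup L] [Module.Finite ℤ L]
    (ℓ : ℕ) (v : Fin ℓ → (L →+ ℤ)) :
    (nonnegSubmonoid v).FG := by
  have : AddMonoid.FG L := AddGroup.fg_iff_addMonoid_fg.mp (Module.Finite.iff_addGroup_fg.mp ‹_›)
  exact nonnegSubmonoid_eq_comap_nonneg v ▸ AddSubmonoid.fg_comap_nonneg _

/-- Gordan's lemma: a subset of a finitely generated free abelian group cut out by
finitely many linear inequalities is a finitely generated monoid. -/
theorem stmt2 {L : Type*} [AddCommGroup L] [Module.Free ℤ L] [Module.Finite ℤ L]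
    (ℓ : ℕ) (v : Fin ℓ → (L →+ ℤ)) :
    (nonnegSubmonoid v).FG :=
  stmt2_general ℓ v
end

section
/- Let V be a finite-dimensional complex inner product space and c > 0. Let (T_n) be a sequence of positive semidefinite self-adjoint operators on V converging (in any norm on End(V)) to an operator T, and assume every nonzero eigenvalue of each T_n is ≥ c. Then T is positive semidefinite, every nonzero eigenvalue of T is ≥ c, and rank(T_n) = rank(T) for all sufficiently large n. -/
/-!
Expanding in an orthonormal eigenbasis, a symmetric operator `A` whose nonzero eigenvalues are
`≥ c ≥ 0` satisfies `c * re ⟪A v, v⟫ ≤ ‖A v‖ ^ 2` for all `v`, and `c * ‖v‖ ≤ ‖A v‖` on `range A`.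
The first inequality survives pointwise limits and, for a positive operator, forces every nonzero
eigenvalue to be `≥ c`; so the limit keeps positivity and the gap. The second shows that if
`‖A - B‖ < c` then `B` is injective on `range A`, whence `rank A ≤ rank B`. In finite dimension
pointwise convergence is operator-norm convergence, so eventually `‖T n - T‖ < c`, and since both
operators have the gap the inequality holds in both directions.
-/

open scoped InnerProductSpace
open Filter Module Topology RCLike

section OperatorNorm

variable {𝕜 E F ι : Type*} [NontriviallyNormedField 𝕜] [CompleteSpace 𝕜]
  [NormedAddCommGroup E] [NormedSpace 𝕜 E] [FiniteDimensional 𝕜 E]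
  [NormedAddCommGroup F] [NormedSpace 𝕜 F] {l : Filter ι}

lemma LinearMap.eventually_norm_sub_apply_le_mul_norm {T : ι → E →ₗ[𝕜] F} {A : E →ₗ[𝕜] F}
    (hT : ∀ v, Tendsto (fun i ↦ T i v) l (𝓝 (A v))) {ε : ℝ} (hε : 0 < ε) :
    ∀ᶠ i in l, ∀ v, ‖T i v - A v‖ ≤ ε * ‖v‖ := by
  let b := Module.finBasis 𝕜 E
  obtain ⟨C, hC, hopNorm⟩ := b.exists_opNorm_le (F := F)
  have hbasis : ∀ᶠ i in l, ∀ j, ‖(T i - A) (b j)‖ ≤ ε / C := by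
    refine eventually_all.2 fun j ↦ ?_
    filter_upwards [(hT (b j)).eventually (Metric.closedBall_mem_nhds _ (div_pos hε hC))] with i hi
    rwa [dist_eq_norm] at hi
  filter_upwards [hbasis] with i hi v
  have hnorm := hopNorm (u := LinearMap.toContinuousLinearMap (T i - A)) (by positivity) hi
  calc ‖T i v - A v‖ = ‖LinearMap.toContinuousLinearMap (T i - A) v‖ := rfl
    _ ≤ ‖LinearMap.toContinuousLinearMap (T i - A)‖ * ‖v‖ := ContinuousLinearMap.le_opNorm _ _
    _ ≤ C * (ε / C) * ‖v‖ := by gcongr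
    _ = ε * ‖v‖ := by field_simp

end OperatorNorm

namespace LinearMap

variable {𝕜 E : Type*} [RCLike 𝕜] [NormedAddCommGroup E] [InnerProductSpace 𝕜 E]

/-- For positive `A`, a lower bound on the gap between `0` and the rest of the spectrum. -/
def HasSpectralGap (A : E →ₗ[𝕜] E) (c : ℝ) : Prop :=
  ∀ μ : 𝕜, Module.End.HasEigenvalue A μ → μ ≠ 0 → c ≤ re μ

variable {A : E →ₗ[𝕜] E} {c : ℝ}

namespace IsSymmetric

variable [FiniteDimensional 𝕜 E]

lemma eigenvalues_eq_zero_or_le (hA : A.IsSymmetric) (hgap : A.HasSpectralGap c)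
    (i : Fin (finrank 𝕜 E)) : hA.eigenvalues rfl i = 0 ∨ c ≤ hA.eigenvalues rfl i :=
  or_iff_not_imp_left.2 fun h ↦ by
    simpa using hgap _ (hA.hasEigenvalue_eigenvalues rfl i) (by exact_mod_cast h)

lemma re_inner_apply_self_eq_sum (hA : A.IsSymmetric) (v : E) :
    re ⟪A v, v⟫_𝕜 =
      ∑ i, hA.eigenvalues rfl i * ‖(hA.eigenvectorBasis rfl).repr v i‖ ^ 2 := by
  rw [← (hA.eigenvectorBasis rfl).repr.inner_map_map, PiLp.inner_apply, map_sum]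
  refine Finset.sum_congr rfl fun i _ ↦ ?_
  rw [hA.eigenvectorBasis_apply_self_apply, RCLike.inner_apply]
  simp only [map_mul, conj_ofReal]
  rw [mul_left_comm, re_ofReal_mul, RCLike.mul_conj]
  norm_cast

lemma norm_apply_sq_eq_sum (hA : A.IsSymmetric) (v : E) :
    ‖A v‖ ^ 2 = ∑ i, hA.eigenvalues rfl i ^ 2 * ‖(hA.eigenvectorBasis rfl).repr v i‖ ^ 2 := by
  rw [← (hA.eigenvectorBasis rfl).repr.norm_map, EuclideanSpace.norm_sq_eq]
  refine Finset.sum_congr rfl fun i _ ↦ ?_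
  rw [hA.eigenvectorBasis_apply_self_apply, norm_mul, mul_pow, norm_ofReal, sq_abs]

lemma mul_re_inner_apply_self_le_norm_apply_sq (hA : A.IsSymmetric) (hc : 0 ≤ c)
    (hgap : A.HasSpectralGap c) (v : E) : c * re ⟪A v, v⟫_𝕜 ≤ ‖A v‖ ^ 2 := by
  rw [hA.re_inner_apply_self_eq_sum, hA.norm_apply_sq_eq_sum, Finset.mul_sum]
  refine Finset.sum_le_sum fun i _ ↦ ?_
  rw [← mul_assoc, sq (hA.eigenvalues rfl i)]
  rcases hA.eigenvalues_eq_zero_or_le hgap i with h | h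
  · simp [h]
  · gcongr
    exact hc.trans h

lemma mul_norm_le_norm_apply_of_mem_range (hA : A.IsSymmetric) (hgap : A.HasSpectralGap c)
    {v : E} (hv : v ∈ range A) : c * ‖v‖ ≤ ‖A v‖ := by
  rcases lt_or_ge c 0 with hc | hc
  · exact (mul_nonpos_of_nonpos_of_nonneg hc.le (norm_nonneg v)).trans (norm_nonneg _)
  obtain ⟨w, rfl⟩ := hv
  suffices (c * ‖A w‖) ^ 2 ≤ ‖A (A w)‖ ^ 2 from
    (pow_le_pow_iff_left₀ (by positivity) (norm_nonneg _) two_ne_zero).1 this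
  rw [mul_pow, ← (hA.eigenvectorBasis rfl).repr.norm_map, EuclideanSpace.norm_sq_eq,
    hA.norm_apply_sq_eq_sum, Finset.mul_sum]
  refine Finset.sum_le_sum fun i _ ↦ ?_
  rcases hA.eigenvalues_eq_zero_or_le hgap i with h | h
  · simp [hA.eigenvectorBasis_apply_self_apply, h]
  · gcongr

end IsSymmetric

lemma IsPositive.hasSpectralGap_of_mul_re_inner_le_norm_sq (hA : A.IsPositive)
    (h : ∀ v, c * re ⟪A v, v⟫_𝕜 ≤ ‖A v‖ ^ 2) : A.HasSpectralGap c := by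
  intro μ hμ hμ0
  obtain ⟨v, hv⟩ := hμ.exists_hasEigenvector
  have hreal : (re μ : 𝕜) = μ := conj_eq_iff_re.1 (hA.isSymmetric.conj_eigenvalue_eq_self hμ)
  have hre : 0 < re μ := by
    refine (eigenvalue_nonneg_of_nonneg (by rwa [hreal]) hA.re_inner_nonneg_right).lt_of_ne ?_
    intro h
    exact hμ0 (by rw [← hreal, ← h, ofReal_zero])
  have hv0 : 0 < ‖v‖ ^ 2 := pow_pos (norm_pos_iff.2 hv.2) 2
  have hAv : A v = (re μ : 𝕜) • v := by rw [hreal]; exact hv.apply_eq_smul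
  have := h v
  rw [hAv, inner_smul_left, conj_ofReal, inner_self_eq_norm_sq_to_K, norm_smul, norm_ofReal,
    ← ofReal_pow, ← ofReal_mul, ofReal_re, abs_of_pos hre] at this
  nlinarith [mul_pos hre hv0]

section Limit

variable {ι : Type*} {l : Filter ι} [l.NeBot] {T : ι → E →ₗ[𝕜] E}

lemma isPositive_of_tendsto (hT : ∀ i, (T i).IsPositive)
    (hA : ∀ v, Tendsto (fun i ↦ T i v) l (𝓝 (A v))) : A.IsPositive := by
  refine ⟨fun x y ↦ tendsto_nhds_unique ((hA x).inner tendsto_const_nhds) ?_, fun v ↦ ?_⟩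
  · simp_rw [(hT _).isSymmetric x y]
    exact tendsto_const_nhds.inner (hA y)
  · exact ge_of_tendsto' ((continuous_re.tendsto _).comp ((hA v).inner tendsto_const_nhds))
      fun i ↦ (hT i).re_inner_nonneg_left v

lemma hasSpectralGap_of_tendsto [FiniteDimensional 𝕜 E] (hc : 0 ≤ c)
    (hT : ∀ i, (T i).IsPositive) (hgap : ∀ i, (T i).HasSpectralGap c)
    (hA : ∀ v, Tendsto (fun i ↦ T i v) l (𝓝 (A v))) : A.HasSpectralGap c :=
  (isPositive_of_tendsto hT hA).hasSpectralGap_of_mul_re_inner_le_norm_sq fun v ↦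
    le_of_tendsto_of_tendsto'
      (((continuous_re.tendsto _).comp ((hA v).inner tendsto_const_nhds)).const_mul c)
      ((hA v).norm.pow 2)
      fun i ↦ (hT i).isSymmetric.mul_re_inner_apply_self_le_norm_apply_sq hc (hgap i) v

end Limit

lemma finrank_range_le_of_forall_norm_sub_apply_le [FiniteDimensional 𝕜 E] {B : E →ₗ[𝕜] E}
    {ε : ℝ} (hA : A.IsSymmetric) (hgap : A.HasSpectralGap c) (hε : ε < c)
    (hAB : ∀ v, ‖A v - B v‖ ≤ ε * ‖v‖) : finrank 𝕜 (range A) ≤ finrank 𝕜 (range B) := by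
  let f : range A →ₗ[𝕜] range B :=
    (B.domRestrict (range A)).codRestrict (range B) fun v ↦ mem_range_self B v
  refine finrank_le_finrank_of_injective (f := f) ((injective_iff_map_eq_zero f).2 ?_)
  rintro ⟨v, hv⟩ hfv
  have hBv : B v = 0 := congrArg Subtype.val hfv
  have hle : c * ‖v‖ ≤ ε * ‖v‖ :=
    calc c * ‖v‖ ≤ ‖A v‖ := hA.mul_norm_le_norm_apply_of_mem_range hgap hv
      _ = ‖A v - B v‖ := by rw [hBv, sub_zero]
      _ ≤ ε * ‖v‖ := hAB v
  have hv0 : ‖v‖ = 0 := by nlinarith [norm_nonneg v]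
  simpa using hv0

end LinearMap

/-- A convergent sequence of positive semidefinite self-adjoint operators on a
finite-dimensional complex inner product space whose nonzero eigenvalues are all `≥ c > 0`
has a positive semidefinite limit with the same spectral gap, and the ranks eventually
equal the rank of the limit. -/
theorem stmt11 {V : Type*} [NormedAddCommGroup V] [InnerProductSpace ℂ V]
    [FiniteDimensional ℂ V]
    (c : ℝ) (hc : 0 < c) (T : ℕ → (V →ₗ[ℂ] V)) (Tlim : V →ₗ[ℂ] V)
    (hsym : ∀ n, (T n).IsSymmetric)
    (hpos : ∀ n (v : V), 0 ≤ (⟪(T n) v, v⟫_ℂ).re)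
    (hgap : ∀ n (μ : ℂ), Module.End.HasEigenvalue (T n) μ → μ ≠ 0 → c ≤ μ.re)
    (hconv : ∀ v : V, Filter.Tendsto (fun n => T n v) Filter.atTop (nhds (Tlim v))) :
    Tlim.IsSymmetric ∧ (∀ v : V, 0 ≤ (⟪Tlim v, v⟫_ℂ).re) ∧
    (∀ μ : ℂ, Module.End.HasEigenvalue Tlim μ → μ ≠ 0 → c ≤ μ.re) ∧
    (∀ᶠ n in Filter.atTop,
      Module.finrank ℂ ↥(LinearMap.range (T n)) =
        Module.finrank ℂ ↥(LinearMap.range Tlim)) := by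
  have hTpos (n : ℕ) : (T n).IsPositive := ⟨hsym n, hpos n⟩
  have hlim : Tlim.IsPositive := LinearMap.isPositive_of_tendsto hTpos hconv
  have hgaplim : Tlim.HasSpectralGap c :=
    LinearMap.hasSpectralGap_of_tendsto hc.le hTpos hgap hconv
  refine ⟨hlim.isSymmetric, hlim.re_inner_nonneg_left, hgaplim, ?_⟩
  filter_upwards [LinearMap.eventually_norm_sub_apply_le_mul_norm hconv (half_pos hc)] with n hn
  exact le_antisymm
    (LinearMap.finrank_range_le_of_forall_norm_sub_apply_le (hsym n) (hgap n) (half_lt_self hc) hn)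
    (LinearMap.finrank_range_le_of_forall_norm_sub_apply_le hlim.isSymmetric hgaplim
      (half_lt_self hc) fun v ↦ norm_sub_rev (T n v) _ ▸ hn v)
end
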